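/- arXiv:0902.1715 — 5 statements merged into one kernel-verified Lean document; each statement's English description precedes it below -/
import Mathlib

section
/- For infinitely many positive integers t, the on-line Ramsey number of the complete graph K_t satisfies r̃(t) ≤ 1.001^{-t} · C(r(t), 2), where r(t) is the diagonal Ramsey number and C(n,2) = n(n-1)/2. Formally: for every t₀ there exists t ≥ t₀ with (r̃(t) : ℝ) ≤ 1.001^{-t} · (r(t) choose 2). -/
/-- A monochromatic clique of size `k` in colour `i` for an edge-colouring `c` of `K_n`. -/
def monoClique {n q : ℕ} (c : Sym2 (Fin n) → Fin q) (i : Fin q) (k : ℕ) : Prop :=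
  ∃ A : Finset (Fin n), A.card = k ∧ ∀ u ∈ A, ∀ v ∈ A, u ≠ v → c s(u, v) = i

/-- The `q`-colour Ramsey number `r(k 0, …, k (q-1))`. -/
noncomputable def ramseyQ {q : ℕ} (k : Fin q → ℕ) : ℕ :=
  sInf {n : ℕ | ∀ c : Sym2 (Fin n) → Fin q, ∃ i : Fin q, monoClique c i (k i)}

/-- The two-colour Ramsey number `r(s, t)`. -/
noncomputable def ramsey2 (s t : ℕ) : ℕ := ramseyQ ![s, t]

/-- A history in the on-line Ramsey game: the previously presented edges with their colours. -/
abbrev History (q : ℕ) := List (Sym2 ℕ × Fin q)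

/-- A Builder strategy is valid if it always presents a genuine new edge. -/
def validBuilder {q : ℕ} (B : History q → Sym2 ℕ) : Prop :=
  ∀ h : History q, ¬ (B h).IsDiag ∧ B h ∉ h.map Prod.fst

/-- The play determined by a Builder strategy `B` and a Painter strategy `P`:
`play B P n` is the history after `n` rounds. -/
def play {q : ℕ} (B : History q → Sym2 ℕ) (P : History q → Sym2 ℕ → Fin q) : ℕ → History q
  | 0 => []
  | n + 1 =>
      let h := play B P n
      h ++ [(B h, P h (B h))]

/-- The graph formed by the edges of colour `i` in a history. -/
def colourGraph {q : ℕ} (h : History q) (i : Fin q) : SimpleGraph ℕ :=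
  SimpleGraph.fromEdgeSet {e | (e, i) ∈ h}

/-- `H` contains a copy of `G` as a subgraph. -/
def containsCopy {V : Type*} (G : SimpleGraph V) (H : SimpleGraph ℕ) : Prop :=
  ∃ f : V → ℕ, Function.Injective f ∧ ∀ u v, G.Adj u v → H.Adj (f u) (f v)

/-- The `q`-colour on-line Ramsey number of `G`: the least `N` such that Builder has a
valid strategy forcing, against every Painter strategy, a monochromatic copy of `G`
within at most `N` rounds. -/
noncomputable def onlineRamsey {V : Type*} (q : ℕ) (G : SimpleGraph V) : ℕ :=
  sInf {N : ℕ | ∃ B : History q → Sym2 ℕ, validBuilder B ∧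
    ∀ P : History q → Sym2 ℕ → Fin q,
      ∃ n ≤ N, ∃ i : Fin q, containsCopy G (colourGraph (play B P n) i)}


/-!
Builder plays an on-line version of the Erdős–Szekeres argument. He keeps a pool of untouched
vertices, joins one pool vertex `v` to the rest of the pool and continues inside a colour class
that is still large enough, remembering `v` as a spine vertex of that colour; once the remaining
Ramsey number `r(a, b)` is at most `ρ = r(s, s)` he colours all pairs of `ρ` pool vertices.
Lattice-path weights bound every pool by `2ρ · 32^(t - s) · (32/31)^t`, so the whole game costs at
most `2t` pools plus `C(ρ, 2)`. As `ρ > √2^s`, this is below `1.001^(-t) · C(r(t), 2)` as soon as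
`r(t) ≥ e^(t/100) · r(s)` with `s = 19t/20`, and that happens for infinitely many `t`: otherwise
iterating `t ↦ s` would give `r(t) ≤ C · e^(t/5)`, against Erdős' bound `r(t) > √2^t`.
-/

open Finset Filter

section Ramsey

variable {α β : Type*} {q : ℕ}

theorem Finset.exists_le_card_filter_of_sum_lt {ι : Type*} [Fintype ι] [DecidableEq ι]
    (f : α → ι) (W : Finset α) (m : ι → ℕ) (h : ∑ i, (m i - 1) < #W) :
    ∃ i, m i ≤ #{w ∈ W | f w = i} := by
  by_contra! hlt
  have hW := card_eq_sum_card_fiberwise (f := f) (s := W) (t := univ)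
    fun _ _ ↦ mem_coe.2 (mem_univ _)
  have : ∑ i, #{w ∈ W | f w = i} ≤ ∑ i, (m i - 1) :=
    sum_le_sum fun i _ ↦ Nat.le_sub_one_of_lt (hlt i)
  omega

theorem sum_update_sub_one {ι : Type*} [Fintype ι] [DecidableEq ι] (k : ι → ℕ) {i : ι}
    (hi : k i ≠ 0) : ∑ j, Function.update k i (k i - 1) j = ∑ j, k j - 1 := by
  rw [sum_update_of_mem (mem_univ i), ← add_sum_erase _ _ (mem_univ i), sdiff_singleton_eq_erase]
  omega

def HasMonoSubset (c : Sym2 α → Fin q) (k : Fin q → ℕ) (A : Finset α) : Prop :=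
  ∃ i, ∃ C ⊆ A, #C = k i ∧ (C : Set α).Pairwise fun x y ↦ c s(x, y) = i

namespace HasMonoSubset

variable {c : Sym2 α → Fin q} {k k' : Fin q → ℕ} {A B : Finset α}

theorem mono (h : HasMonoSubset c k A) (hAB : A ⊆ B) (hk : k' ≤ k) :
    HasMonoSubset c k' B := by
  obtain ⟨i, C, hCA, hC, hmono⟩ := h
  obtain ⟨D, hDC, hD⟩ := exists_subset_card_eq (hC ▸ hk i)
  exact ⟨i, D, hDC.trans (hCA.trans hAB), hD, hmono.mono (coe_subset.2 hDC)⟩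

theorem map (f : β ↪ α) {A : Finset β} (h : HasMonoSubset (fun e ↦ c (e.map f)) k A) :
    HasMonoSubset c k (A.map f) := by
  obtain ⟨i, C, hCA, hC, hmono⟩ := h
  refine ⟨i, C.map f, map_subset_map.2 hCA, by rw [card_map, hC], ?_⟩
  rw [coe_map]
  exact f.injective.injOn.pairwise_image.2 hmono

theorem of_update [DecidableEq α] {v : α} (hv : v ∈ A) {i : Fin q} (hk : k i ≠ 0)
    (h : HasMonoSubset c (Function.update k i (k i - 1)) {w ∈ A.erase v | c s(v, w) = i}) :
    HasMonoSubset c k A := by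
  obtain ⟨j, C, hCN, hC, hmono⟩ := h
  have hCA : C ⊆ A.erase v := hCN.trans (filter_subset _ _)
  rcases eq_or_ne j i with rfl | hji
  · refine ⟨j, insert v C, insert_subset hv (hCA.trans (erase_subset _ _)), ?_, ?_⟩
    · rw [card_insert_of_notMem fun hvC ↦ by simpa using hCA hvC, hC, Function.update_self]
      omega
    · rw [coe_insert, Set.pairwise_insert]
      refine ⟨hmono, fun w hw _ ↦ ?_⟩
      have hw' := (mem_filter.1 (hCN hw)).2
      exact ⟨hw', by rw [Sym2.eq_swap]; exact hw'⟩
  · exact ⟨j, C, hCA.trans (erase_subset _ _), hC.trans (Function.update_of_ne hji _ _), hmono⟩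

end HasMonoSubset

theorem hasMonoSubset_univ_iff {n : ℕ} {c : Sym2 (Fin n) → Fin q} {k : Fin q → ℕ} :
    HasMonoSubset c k univ ↔ ∃ i, monoClique c i (k i) := by
  simp [HasMonoSubset, monoClique, Set.Pairwise]

theorem hasMonoSubset_of_pow_le_card (c : Sym2 α → Fin q) (k : Fin q → ℕ) (A : Finset α)
    (hA : (q + 1) ^ ∑ i, k i ≤ #A) : HasMonoSubset c k A := by
  classical
  obtain ⟨S, hS⟩ : ∃ S, ∑ i, k i = S := ⟨_, rfl⟩
  induction S using Nat.strong_induction_on generalizing k A with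
  | _ S ih =>
  by_cases hzero : ∃ i, k i = 0
  · obtain ⟨i, hi⟩ := hzero
    exact ⟨i, ∅, empty_subset _, by simp [hi], by simp⟩
  push Not at hzero
  obtain ⟨v, hv⟩ : A.Nonempty := card_pos.1 (lt_of_lt_of_le (by positivity) hA)
  have hS1 : 1 ≤ S := hS ▸ Nat.one_le_iff_ne_zero.2 fun h0 ↦
    hzero (c s(v, v)) (sum_eq_zero_iff.1 h0 _ (mem_univ _))
  set X := (q + 1) ^ (S - 1)
  have hX : 1 ≤ X := Nat.one_le_pow _ _ q.succ_pos
  have hAX : q * X + X ≤ #A := by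
    rw [← Nat.succ_mul, ← pow_succ', Nat.sub_add_cancel hS1, ← hS]
    exact hA
  have hqX : q * (X - 1) + q = q * X := by
    rw [Nat.mul_sub_one, Nat.sub_add_cancel (Nat.le_mul_of_pos_right q hX)]
  have hq : 0 < q := (c s(v, v)).pos
  obtain ⟨i, hi⟩ := (A.erase v).exists_le_card_filter_of_sum_lt (fun w ↦ c s(v, w))
    (fun _ ↦ X) (by
      rw [sum_const, card_univ, Fintype.card_fin, smul_eq_mul, card_erase_of_mem hv]
      omega)
  have hk' : ∑ j, Function.update k i (k i - 1) j = S - 1 := hS ▸ sum_update_sub_one k (hzero i)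
  exact .of_update hv (hzero i) (ih (S - 1) (by omega) _ _ (by rwa [hk']) hk')

theorem ramseyQ_spec (k : Fin q → ℕ) (c : Sym2 (Fin (ramseyQ k)) → Fin q) :
    HasMonoSubset c k univ := by
  refine hasMonoSubset_univ_iff.2 (Nat.sInf_mem (s := {n : ℕ | ∀ c : Sym2 (Fin n) → Fin q,
    ∃ i, monoClique c i (k i)}) ⟨(q + 1) ^ ∑ i, k i, fun c ↦ ?_⟩ c)
  exact hasMonoSubset_univ_iff.1 (hasMonoSubset_of_pow_le_card c k univ (by simp))

theorem ramseyQ_le {k : Fin q → ℕ} {n : ℕ}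
    (h : ∀ c : Sym2 (Fin n) → Fin q, HasMonoSubset c k univ) : ramseyQ k ≤ n :=
  Nat.sInf_le fun c ↦ hasMonoSubset_univ_iff.1 (h c)

theorem hasMonoSubset_of_ramseyQ_le {k : Fin q → ℕ} {A : Finset α} (c : Sym2 α → Fin q)
    (hA : ramseyQ k ≤ #A) : HasMonoSubset c k A := by
  obtain ⟨B, hBA, hB⟩ := exists_subset_card_eq hA
  let f : Fin (ramseyQ k) ↪ α :=
    (B.equivFinOfCardEq hB).symm.toEmbedding.trans (Function.Embedding.subtype (· ∈ B))
  refine ((ramseyQ_spec k fun e ↦ c (e.map f)).map f).mono ?_ le_rfl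
  intro x hx
  obtain ⟨j, -, rfl⟩ := mem_map.1 hx
  exact hBA ((B.equivFinOfCardEq hB).symm j).2

theorem ramseyQ_mono {k k' : Fin q → ℕ} (h : k ≤ k') : ramseyQ k ≤ ramseyQ k' :=
  ramseyQ_le fun c ↦ (ramseyQ_spec k' c).mono subset_rfl h

theorem ramseyQ_eq_zero {k : Fin q → ℕ} {i : Fin q} (h : k i = 0) : ramseyQ k = 0 :=
  Nat.le_zero.1 <| ramseyQ_le fun _ ↦ ⟨i, ∅, empty_subset _, by simp [h], by simp⟩

theorem ramsey2_apply (k : Fin 2 → ℕ) : ramsey2 (k 0) (k 1) = ramseyQ k :=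
  congrArg ramseyQ (funext fun i ↦ by fin_cases i <;> rfl)

theorem ramsey2_mono {a b a' b' : ℕ} (ha : a ≤ a') (hb : b ≤ b') :
    ramsey2 a b ≤ ramsey2 a' b' :=
  ramseyQ_mono fun i ↦ by fin_cases i <;> simpa

theorem ne_zero_of_lt_ramsey2 {ρ : ℕ} {k : Fin 2 → ℕ} (h : ρ < ramsey2 (k 0) (k 1)) (i : Fin 2) :
    k i ≠ 0 := fun hi ↦ by
  rw [ramsey2_apply, ramseyQ_eq_zero hi] at h
  exact Nat.not_lt_zero _ h

end Ramsey

section ErdosLowerBound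

theorem card_piFinset_ite_mul_pow {ι : Type*} [Fintype ι] [DecidableEq ι] {q : ℕ}
    (E : Finset ι) (i : Fin q) :
    #(Fintype.piFinset fun e ↦ if e ∈ E then ({i} : Finset (Fin q)) else univ) * q ^ #E =
      q ^ Fintype.card ι := by
  rw [Fintype.card_piFinset]
  simp only [apply_ite card, card_singleton, card_univ, Fintype.card_fin]
  rw [prod_ite, prod_const_one, one_mul, prod_const, filter_not, filter_mem_eq_inter,
    univ_inter, ← pow_add, card_sdiff_add_card_eq_card (subset_univ _), card_univ]

theorem lt_ramseyQ_of_mul_choose_lt {q : ℕ} [NeZero q] {n u : ℕ}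
    (h : q * n.choose u < q ^ u.choose 2) : n < ramseyQ fun _ : Fin q ↦ u := by
  by_contra! hle
  set N := Fintype.card (Sym2 (Fin n))
  let E : Finset (Fin n) → Finset (Sym2 (Fin n)) := fun A ↦
    A.offDiag.image (Function.uncurry Sym2.mk)
  let T : Finset (Fin n) → Fin q → Finset (Sym2 (Fin n) → Fin q) := fun A i ↦
    Fintype.piFinset fun e ↦ if e ∈ E A then {i} else univ
  have hcover : (univ : Finset (Sym2 (Fin n) → Fin q)) ⊆
      (powersetCard u univ).biUnion fun A ↦ univ.biUnion (T A) := by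
    intro c _
    obtain ⟨i, A, -, hA, hmono⟩ := hasMonoSubset_of_ramseyQ_le (k := fun _ ↦ u) (A := univ) c
      (by rwa [card_univ, Fintype.card_fin])
    simp only [mem_biUnion, mem_powersetCard, mem_univ, true_and]
    refine ⟨A, ⟨subset_univ _, hA⟩, i, Fintype.mem_piFinset.2 fun e ↦ ?_⟩
    split_ifs with he
    · obtain ⟨⟨x, y⟩, hxy, rfl⟩ := mem_image.1 he
      obtain ⟨hx, hy, hne⟩ := mem_offDiag.1 hxy
      exact mem_singleton.2 (hmono hx hy hne)
    · exact mem_univ _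
  have hA : ∀ A ∈ powersetCard u univ, #(univ.biUnion (T A)) * q ^ u.choose 2 ≤ q * q ^ N := by
    intro A hA
    have hE : #(E A) = u.choose 2 := by
      rw [Sym2.card_image_offDiag, (mem_powersetCard.1 hA).2]
    calc #(univ.biUnion (T A)) * q ^ u.choose 2 ≤ (∑ i, #(T A i)) * q ^ u.choose 2 :=
          Nat.mul_le_mul_right _ card_biUnion_le
      _ = q * q ^ N := by
          rw [sum_mul, ← hE, sum_congr rfl fun i _ ↦ card_piFinset_ite_mul_pow (E A) i,
            sum_const, card_univ, Fintype.card_fin, smul_eq_mul]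
  have hcount := card_le_card hcover
  rw [card_univ, Fintype.card_fun, Fintype.card_fin] at hcount
  have : q ^ N * q ^ u.choose 2 ≤ n.choose u * q * q ^ N :=
    calc q ^ N * q ^ u.choose 2
        ≤ (∑ A ∈ powersetCard u univ, #(univ.biUnion (T A))) * q ^ u.choose 2 :=
          Nat.mul_le_mul_right _ (hcount.trans card_biUnion_le)
      _ ≤ ∑ A ∈ powersetCard u univ, q * q ^ N := by rw [sum_mul]; exact sum_le_sum hA
      _ = n.choose u * q * q ^ N := by
          rw [sum_const, card_powersetCard, card_univ, Fintype.card_fin, smul_eq_mul, mul_assoc]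
  have hpos : 0 < q ^ N := pow_pos (NeZero.pos q) N
  nlinarith

theorem two_mul_sqrt_two_pow_lt_factorial {u : ℕ} (hu : 4 ≤ u) :
    2 * √2 ^ u < u.factorial := by
  induction u, hu using Nat.le_induction with
  | base =>
    rw [show 4 = 2 * 2 by rfl, pow_mul, Real.sq_sqrt zero_le_two]
    norm_num [Nat.factorial]
  | succ u hu ih =>
    have hsqrt : √2 ≤ u + 1 := by
      have : (4 : ℝ) ≤ u := by exact_mod_cast hu
      rw [Real.sqrt_le_left (by positivity)]
      nlinarith
    rw [Nat.factorial_succ, pow_succ, ← mul_assoc]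
    push_cast
    rw [mul_comm ((u : ℝ) + 1)]
    exact mul_lt_mul ih hsqrt (by positivity) (by positivity)

theorem sqrt_two_pow_lt_ramsey2 {u : ℕ} (hu : 4 ≤ u) : √2 ^ u < ramsey2 u u := by
  set n := ⌊√2 ^ u⌋₊
  have hn : (n : ℝ) ≤ √2 ^ u := Nat.floor_le (by positivity)
  have hsq : (2 : ℝ) ^ u.choose 2 = √2 ^ (u * (u - 1)) := by
    rw [← Nat.two_mul_div_two_of_even (Nat.even_mul_pred_self u), ← Nat.choose_two_right,
      pow_mul, Real.sq_sqrt zero_le_two]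
  have hsplit : (√2 ^ u) ^ u = √2 ^ u * √2 ^ (u * (u - 1)) := by
    rw [← pow_mul, ← pow_add]
    congr 1
    cases u <;> simp [Nat.mul_succ]
    ring
  have key : ((2 * n.choose u : ℕ) : ℝ) < ((2 ^ u.choose 2 : ℕ) : ℝ) := by
    have hfac : (0 : ℝ) < u.factorial := by positivity
    calc ((2 * n.choose u : ℕ) : ℝ) ≤ 2 * ((√2 ^ u) ^ u / u.factorial) := by
          push_cast
          gcongr
          exact (Nat.choose_le_pow_div u n).trans (by gcongr)
      _ = 2 * √2 ^ u * √2 ^ (u * (u - 1)) / u.factorial := by rw [hsplit]; ring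
      _ < u.factorial * √2 ^ (u * (u - 1)) / u.factorial := by
          gcongr
          exact two_mul_sqrt_two_pow_lt_factorial hu
      _ = ((2 ^ u.choose 2 : ℕ) : ℝ) := by push_cast; rw [hsq]; field_simp
  have := lt_ramseyQ_of_mul_choose_lt (q := 2) (by exact_mod_cast key)
  rw [← ramsey2_apply] at this
  calc √2 ^ u < n + 1 := Nat.lt_floor_add_one _
    _ ≤ _ := by exact_mod_cast this

end ErdosLowerBound

theorem frequently_add_mul_le {L : ℕ → ℝ} {s : ℕ → ℕ} {α δ γ : ℝ} (hδ : 0 < δ) (hγ : 0 ≤ γ)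
    (hγα : γ < α * δ) (hs : ∀ t, (s t : ℝ) ≤ (1 - δ) * t) (hL : ∀ᶠ t in atTop, α * t ≤ L t) :
    ∃ᶠ t in atTop, L (s t) + γ * t ≤ L t := by
  by_contra hcon
  obtain ⟨T, hT⟩ := eventually_atTop.1 (not_frequently.1 hcon)
  set A := γ / δ
  have hA : 0 ≤ A := div_nonneg hγ hδ.le
  have hAδ : A * δ = γ := div_mul_cancel₀ γ hδ.ne'
  set C := ∑ t ∈ range (T + 1), |L t|
  have hbound : ∀ t, L t ≤ C + A * t := by
    intro t
    induction t using Nat.strong_induction_on with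
    | _ t ih =>
    by_cases ht : t < T + 1
    · exact (le_abs_self _).trans ((single_le_sum (fun i _ ↦ abs_nonneg (L i))
        (mem_range.2 ht)).trans (le_add_of_nonneg_right (by positivity)))
    have ht0 : (0 : ℝ) < t := by exact_mod_cast (by omega : 0 < t)
    have hst : s t < t := by
      have : (s t : ℝ) < t := (hs t).trans_lt (by nlinarith)
      exact_mod_cast this
    have h1 := ih (s t) hst
    have h2 := not_le.1 (hT t (by omega))
    have h3 : A * s t ≤ A * ((1 - δ) * t) := mul_le_mul_of_nonneg_left (hs t) hA
    nlinarith
  have hαA : 0 < α - A := by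
    rw [sub_pos, div_lt_iff₀ hδ]
    exact hγα
  obtain ⟨t, hLt, hCt⟩ :=
    (hL.and ((tendsto_natCast_atTop_atTop.const_mul_atTop hαA).eventually_gt_atTop C)).exists
  linarith [hbound t]

section OnlineGame

variable {V : Type*} {q : ℕ}

def HasMonoCopy (G : SimpleGraph V) (h : History q) : Prop :=
  ∃ i, containsCopy G (colourGraph h i)

inductive CanForce (G : SimpleGraph V) : ℕ → History q → Prop
  | won {n : ℕ} {h : History q} : HasMonoCopy G h → CanForce G n h
  | move {n : ℕ} {h : History q} (e : Sym2 ℕ) : ¬ e.IsDiag → e ∉ h.map Prod.fst →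
      (∀ c, CanForce G n (h ++ [(e, c)])) → CanForce G (n + 1) h

def IsForcingMove (G : SimpleGraph V) (n : ℕ) (h : History q) (e : Sym2 ℕ) : Prop :=
  ¬ e.IsDiag ∧ e ∉ h.map Prod.fst ∧ ∀ c, CanForce G n (h ++ [(e, c)])

theorem colourGraph_le_append (h l : History q) (i : Fin q) :
    colourGraph h i ≤ colourGraph (h ++ l) i :=
  SimpleGraph.fromEdgeSet_mono fun _ he ↦ List.mem_append_left _ he

theorem colourGraph_append_map_adj (h : History q) {l : List (Sym2 ℕ)} (c : Sym2 ℕ → Fin q)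
    {x y : ℕ} (hxy : x ≠ y) (hl : s(x, y) ∈ l) :
    (colourGraph (h ++ l.map fun e ↦ (e, c e)) (c s(x, y))).Adj x y :=
  (SimpleGraph.fromEdgeSet_adj _).2
    ⟨List.mem_append_right _ (List.mem_map.2 ⟨_, hl, rfl⟩), hxy⟩

theorem hasMonoCopy_of_isNClique {t : ℕ} {h : History q} {i : Fin q} {C : Finset ℕ}
    (hC : (colourGraph h i).IsNClique t C) : HasMonoCopy (⊤ : SimpleGraph (Fin t)) h := by
  obtain ⟨f⟩ := not_isEmpty_iff.1 (SimpleGraph.cliqueFree_iff.not.1 hC.not_cliqueFree)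
  exact ⟨i, f.toHom, f.injective, fun _ _ ↦ f.toHom.map_adj⟩

namespace CanForce

variable {G : SimpleGraph V}

theorem mono {n n' : ℕ} {h : History q} (hcf : CanForce G n h) (hn : n ≤ n') :
    CanForce G n' h := by
  induction hcf generalizing n' with
  | won hw => exact won hw
  | move e hd hf _ ih =>
    obtain ⟨m, rfl⟩ : ∃ m, n' = m + 1 := ⟨n' - 1, by omega⟩
    exact move e hd hf fun c ↦ ih c (by omega)

theorem present_list [NeZero q] {n : ℕ} (l : List (Sym2 ℕ)) (hl : l.Nodup) {h : History q}
    (hdiag : ∀ e ∈ l, ¬ e.IsDiag) (hfresh : ∀ e ∈ l, e ∉ h.map Prod.fst)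
    (hwin : ∀ c : Sym2 ℕ → Fin q, CanForce G n (h ++ l.map fun e ↦ (e, c e))) :
    CanForce G (n + l.length) h := by
  induction l generalizing h with
  | nil => simpa using hwin fun _ ↦ 0
  | cons e l ih =>
    obtain ⟨hel, hl⟩ := List.nodup_cons.1 hl
    refine move e (hdiag e List.mem_cons_self) (hfresh e List.mem_cons_self) fun col ↦ ?_
    refine ih hl (fun e' he' ↦ hdiag e' (List.mem_cons_of_mem _ he')) (fun e' he' ↦ ?_) fun c ↦ ?_
    · simp only [List.map_append, List.map_cons, List.map_nil, List.mem_append,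
        List.mem_singleton, not_or]
      exact ⟨hfresh e' (List.mem_cons_of_mem _ he'), fun hee ↦ hel (hee ▸ he')⟩
    · have hmap : l.map (fun e' ↦ (e', Function.update c e col e')) = l.map fun e' ↦ (e', c e') :=
        List.map_congr_left fun e' he' ↦ by
          rw [Function.update_of_ne fun hee : e' = e ↦ hel (hee ▸ he')]
      simpa [hmap] using hwin (Function.update c e col)

theorem present [NeZero q] {n : ℕ} (E : Finset (Sym2 ℕ)) {h : History q}
    (hdiag : ∀ e ∈ E, ¬ e.IsDiag) (hfresh : ∀ e ∈ E, e ∉ h.map Prod.fst)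
    (hwin : ∀ c : Sym2 ℕ → Fin q, CanForce G n (h ++ E.toList.map fun e ↦ (e, c e))) :
    CanForce G (n + #E) h := by
  simpa using present_list E.toList E.nodup_toList (by simpa using hdiag)
    (by simpa using hfresh) hwin

end CanForce

theorem exists_fresh_edge (l : List (Sym2 ℕ)) : ∃ e, ¬ e.IsDiag ∧ e ∉ l := by
  have hinj : Function.Injective fun n : ℕ ↦ s(0, n + 1) := fun m n hmn ↦ by
    simpa using Sym2.congr_right.1 hmn
  obtain ⟨_, ⟨n, rfl⟩, hn⟩ :=
    (Set.infinite_range_of_injective hinj).exists_notMem_finset l.toFinset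
  refine ⟨s(0, n + 1), ?_, by simpa using hn⟩
  rw [Sym2.mk_isDiag_iff]
  omega

open Classical in
noncomputable def forcingBuilder (G : SimpleGraph V) (N : ℕ) (h : History q) : Sym2 ℕ :=
  if hm : ∃ e, IsForcingMove G (N - h.length - 1) h e then hm.choose
  else (exists_fresh_edge (h.map Prod.fst)).choose

theorem forcingBuilder_spec {G : SimpleGraph V} {N : ℕ} {h : History q}
    (hm : ∃ e, IsForcingMove G (N - h.length - 1) h e) :
    IsForcingMove G (N - h.length - 1) h (forcingBuilder G N h) := by
  rw [forcingBuilder, dif_pos hm]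
  exact hm.choose_spec

theorem forcingBuilder_valid (G : SimpleGraph V) (N : ℕ) :
    validBuilder (forcingBuilder (q := q) G N) := by
  intro h
  by_cases hm : ∃ e, IsForcingMove G (N - h.length - 1) h e
  · exact ⟨(forcingBuilder_spec hm).1, (forcingBuilder_spec hm).2.1⟩
  · rw [forcingBuilder, dif_neg hm]
    exact (exists_fresh_edge _).choose_spec

theorem length_play (B : History q → Sym2 ℕ) (P : History q → Sym2 ℕ → Fin q) (n : ℕ) :
    (play B P n).length = n := by
  induction n with
  | zero => rfl
  | succ n ih => simp [play, ih]

theorem onlineRamsey_le_of_canForce {G : SimpleGraph V} {N : ℕ}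
    (hN : CanForce G N ([] : History q)) : onlineRamsey q G ≤ N := by
  refine Nat.sInf_le ⟨forcingBuilder G N, forcingBuilder_valid G N, fun P ↦ ?_⟩
  set B := forcingBuilder (q := q) G N
  have key : ∀ n ≤ N,
      (∃ m ≤ n, HasMonoCopy G (play B P m)) ∨ CanForce G (N - n) (play B P n) := by
    intro n
    induction n with
    | zero => exact fun _ ↦ Or.inr hN
    | succ n ih =>
      intro hn
      obtain ⟨m, hmn, hm⟩ | hcf := ih (by omega)
      · exact Or.inl ⟨m, by omega, hm⟩
      have hbudget : N - (play B P n).length - 1 = N - (n + 1) := by rw [length_play]; omega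
      rw [show N - n = N - (n + 1) + 1 by omega] at hcf
      cases hcf with
      | won hw => exact Or.inl ⟨n, by omega, hw⟩
      | move e hd hf hnext =>
        exact Or.inr (hbudget ▸ (forcingBuilder_spec ⟨e, hd, hf, hbudget ▸ hnext⟩).2.2 _)
  obtain ⟨m, hm, i, hi⟩ | hcf := key N le_rfl
  · exact ⟨m, hm, i, hi⟩
  · rw [Nat.sub_self] at hcf
    cases hcf with
    | won hw => exact ⟨N, le_rfl, hw⟩

end OnlineGame

section Spine

/-- Pool size that Builder's strategy needs in state `(a, b)`: the Erdős–Szekeres recursion,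
cut off by colouring all pairs of `ρ` vertices as soon as `r(a, b) ≤ ρ`. -/
noncomputable def poolSize (ρ : ℕ) : ℕ → ℕ → ℕ
  | a + 1, b + 1 =>
    if ramsey2 (a + 1) (b + 1) ≤ ρ then ρ else poolSize ρ a (b + 1) + poolSize ρ (a + 1) b
  | _, _ => ρ

variable {ρ : ℕ}

theorem poolSize_of_le {a b : ℕ} (h : ramsey2 a b ≤ ρ) : poolSize ρ a b = ρ := by
  cases a <;> cases b <;> simp [poolSize, h]

theorem poolSize_of_lt {a b : ℕ} (h : ρ < ramsey2 (a + 1) (b + 1)) :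
    poolSize ρ (a + 1) (b + 1) = poolSize ρ a (b + 1) + poolSize ρ (a + 1) b := by
  rw [poolSize, if_neg h.not_ge]

theorem le_poolSize (a b : ℕ) : ρ ≤ poolSize ρ a b := by
  fun_induction poolSize ρ a b with
  | case1 | case3 => exact le_rfl
  | case2 _ _ _ ih _ => exact ih.trans (Nat.le_add_right _ _)

theorem poolSize_eq_sum {k : Fin 2 → ℕ} (h : ρ < ramsey2 (k 0) (k 1)) :
    poolSize ρ (k 0) (k 1) = ∑ i, poolSize ρ (Function.update k i (k i - 1) 0)
      (Function.update k i (k i - 1) 1) := by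
  obtain ⟨a, ha⟩ := Nat.exists_eq_succ_of_ne_zero (ne_zero_of_lt_ramsey2 h 0)
  obtain ⟨b, hb⟩ := Nat.exists_eq_succ_of_ne_zero (ne_zero_of_lt_ramsey2 h 1)
  rw [ha, hb] at h ⊢
  simp [Fin.sum_univ_two, Function.update_apply, ha, hb, poolSize_of_lt h]

/-- A position of Builder's strategy for `K_t`: `K i` holds the spine vertices of colour `i`, `S`
is the pool, and `k i` more vertices of colour `i` would complete a monochromatic `K_t`. -/
structure SpineState (t : ℕ) (h : History 2) (k : Fin 2 → ℕ) (K : Fin 2 → Finset ℕ)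
    (S : Finset ℕ) : Prop where
  fresh : ∀ x ∈ S, ∀ y ∈ S, s(x, y) ∉ h.map Prod.fst
  card_add : ∀ i, #(K i) + k i = t
  disjoint : ∀ i, Disjoint (K i) S
  isClique : ∀ i, (colourGraph h i).IsClique (K i : Set ℕ)
  adj : ∀ i, ∀ x ∈ K i, ∀ y ∈ S, (colourGraph h i).Adj x y

namespace SpineState

variable {t : ℕ} {h : History 2} {k : Fin 2 → ℕ} {K : Fin 2 → Finset ℕ} {S : Finset ℕ}

theorem canForce_of_ramseyQ_le (hst : SpineState t h k K S) (hS : ramseyQ k ≤ #S) :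
    CanForce (⊤ : SimpleGraph (Fin t)) ((#S).choose 2) h := by
  rw [← Sym2.card_image_offDiag, ← zero_add (#_)]
  refine CanForce.present _ ?_ ?_ fun c ↦ .won ?_
  · rintro _ he
    obtain ⟨⟨x, y⟩, hxy, rfl⟩ := mem_image.1 he
    exact Sym2.mk_isDiag_iff.not.2 (mem_offDiag.1 hxy).2.2
  · rintro _ he
    obtain ⟨⟨x, y⟩, hxy, rfl⟩ := mem_image.1 he
    obtain ⟨hx, hy, -⟩ := mem_offDiag.1 hxy
    exact hst.fresh x hx y hy
  obtain ⟨i, C, hCS, hC, hmono⟩ := hasMonoSubset_of_ramseyQ_le c hS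
  have hle := colourGraph_le_append h
    ((S.offDiag.image (Function.uncurry Sym2.mk)).toList.map fun e ↦ (e, c e)) i
  refine hasMonoCopy_of_isNClique (i := i) (C := K i ∪ C) ⟨?_, ?_⟩
  · rw [coe_union, SimpleGraph.IsClique, Set.pairwise_union]
    refine ⟨(hst.isClique i).mono hle, fun x hx y hy hxy ↦ ?_, fun x hx y hy _ ↦ ?_⟩
    · rw [← hmono hx hy hxy]
      exact colourGraph_append_map_adj h c hxy
        (mem_toList.2 (mem_image.2 ⟨(x, y), mem_offDiag.2 ⟨hCS hx, hCS hy, hxy⟩, rfl⟩))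
    · have := hle (hst.adj i x hx y (hCS hy))
      exact ⟨this, this.symm⟩
  · rw [card_union_of_disjoint (disjoint_of_subset_right hCS (hst.disjoint i)), hC,
      hst.card_add]

theorem canForce_of_ramsey2_le (hst : SpineState t h k K S) (hleaf : ramsey2 (k 0) (k 1) ≤ ρ)
    (hS : #S = poolSize ρ (k 0) (k 1)) (n : ℕ) :
    CanForce (⊤ : SimpleGraph (Fin t)) (n * poolSize ρ (k 0) (k 1) + ρ.choose 2) h := by
  rw [poolSize_of_le hleaf] at hS ⊢
  refine (hst.canForce_of_ramseyQ_le ?_).mono ?_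
  · rw [← ramsey2_apply, hS]
    exact hleaf
  · rw [hS]
    exact Nat.le_add_left _ _

theorem restrict (hst : SpineState t h k K S) {S' : Finset ℕ} (hS' : S' ⊆ S) (l : History 2)
    (hl : ∀ x ∈ S', ∀ y ∈ S', s(x, y) ∉ l.map Prod.fst) : SpineState t (h ++ l) k K S' where
  fresh x hx y hy hxy := by
    rw [List.map_append, List.mem_append] at hxy
    exact hxy.elim (hst.fresh x (hS' hx) y (hS' hy)) (hl x hx y hy)
  card_add := hst.card_add
  disjoint i := disjoint_of_subset_right hS' (hst.disjoint i)
  isClique i := (hst.isClique i).mono (colourGraph_le_append h l i)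
  adj i x hx y hy := colourGraph_le_append h l i (hst.adj i x hx y (hS' hy))

theorem promote (hst : SpineState t h k K S) {v : ℕ} {i : Fin 2} (hvS : v ∉ S) (hk : k i ≠ 0)
    (hKv : ∀ x ∈ K i, (colourGraph h i).Adj x v) (hvadj : ∀ y ∈ S, (colourGraph h i).Adj v y) :
    SpineState t h (Function.update k i (k i - 1)) (Function.update K i (insert v (K i))) S := by
  have hvK : v ∉ K i := fun hv ↦ (hKv v hv).ne rfl
  refine ⟨hst.fresh, fun j ↦ ?_, fun j ↦ ?_, fun j ↦ ?_, fun j ↦ ?_⟩ <;>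
    rcases eq_or_ne j i with rfl | hji
  · rw [Function.update_self, Function.update_self, card_insert_of_notMem hvK, ← hst.card_add j]
    omega
  · rw [Function.update_of_ne hji, Function.update_of_ne hji]
    exact hst.card_add j
  · rw [Function.update_self]
    exact disjoint_insert_left.2 ⟨hvS, hst.disjoint j⟩
  · rw [Function.update_of_ne hji]
    exact hst.disjoint j
  · rw [Function.update_self, coe_insert, SimpleGraph.isClique_insert]
    exact ⟨hst.isClique j, fun x hx _ ↦ (hKv x hx).symm⟩
  · rw [Function.update_of_ne hji]
    exact hst.isClique j
  · rw [Function.update_self]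
    intro x hx y hy
    rcases mem_insert.1 hx with rfl | hx
    exacts [hvadj y hy, hst.adj j x hx y hy]
  · rw [Function.update_of_ne hji]
    exact hst.adj j

theorem child (hst : SpineState t h k K S) {v : ℕ} (hv : v ∈ S) (c : Sym2 ℕ → Fin 2)
    {i : Fin 2} (hk : k i ≠ 0) {S' : Finset ℕ} (hS' : S' ⊆ {w ∈ S.erase v | c s(v, w) = i}) :
    SpineState t (h ++ ((S.erase v).image fun w ↦ s(v, w)).toList.map fun e ↦ (e, c e))
      (Function.update k i (k i - 1)) (Function.update K i (insert v (K i))) S' := by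
  have hS'S : S' ⊆ S := hS'.trans ((filter_subset _ _).trans (erase_subset _ _))
  have hvS' : v ∉ S' := fun hv' ↦ by simpa using hS' hv'
  refine (hst.restrict hS'S _ fun x hx y hy hxy ↦ ?_).promote hvS' hk
    (fun x hx ↦ colourGraph_le_append _ _ i (hst.adj i x hx v hv)) fun y hy ↦ ?_
  · simp only [List.map_map, List.mem_map, mem_toList, mem_image, Function.comp_apply,
      exists_exists_and_eq_and, Sym2.eq_iff] at hxy
    obtain ⟨w, -, ⟨rfl, -⟩ | ⟨rfl, -⟩⟩ := hxy <;> contradiction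
  · have hyN := mem_filter.1 (hS' hy)
    rw [← hyN.2]
    exact colourGraph_append_map_adj h c (fun hvy ↦ hvS' (hvy ▸ hy))
      (mem_toList.2 (mem_image.2 ⟨y, hyN.1, rfl⟩))

theorem canForce_star (hst : SpineState t h k K S) {v : ℕ} (hv : v ∈ S) {n : ℕ}
    (hwin : ∀ c : Sym2 ℕ → Fin 2, CanForce (⊤ : SimpleGraph (Fin t)) n
      (h ++ ((S.erase v).image fun w ↦ s(v, w)).toList.map fun e ↦ (e, c e))) :
    CanForce (⊤ : SimpleGraph (Fin t)) (n + (#S - 1)) h := by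
  rw [← card_erase_of_mem hv, ← card_image_of_injective _ fun _ _ h ↦ Sym2.congr_right.1 h]
  refine CanForce.present _ (fun e he ↦ ?_) (fun e he ↦ ?_) hwin
  · obtain ⟨w, hw, rfl⟩ := mem_image.1 he
    exact Sym2.mk_isDiag_iff.not.2 (ne_of_mem_erase hw).symm
  · obtain ⟨w, hw, rfl⟩ := mem_image.1 he
    exact hst.fresh v hv w (mem_of_mem_erase hw)

theorem canForce (hρ : 0 < ρ) (n : ℕ) :
    ∀ {h k K S}, k 0 + k 1 = n → SpineState t h k K S → #S = poolSize ρ (k 0) (k 1) →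
      CanForce (⊤ : SimpleGraph (Fin t)) (n * poolSize ρ (k 0) (k 1) + ρ.choose 2) h := by
  induction n with
  | zero =>
    intro h k K S hn hst hS
    refine hst.canForce_of_ramsey2_le (not_lt.1 fun hlt ↦ ?_) hS 0
    exact ne_zero_of_lt_ramsey2 hlt 0 (by omega)
  | succ m ih =>
    intro h k K S hn hst hS
    by_cases hleaf : ramsey2 (k 0) (k 1) ≤ ρ
    · exact hst.canForce_of_ramsey2_le hleaf hS _
    push Not at hleaf
    set P := poolSize ρ (k 0) (k 1)
    set P' : Fin 2 → ℕ := fun i ↦ poolSize ρ (Function.update k i (k i - 1) 0)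
      (Function.update k i (k i - 1) 1)
    have hP : P = P' 0 + P' 1 := (poolSize_eq_sum hleaf).trans (Fin.sum_univ_two _)
    have hρP' : ∀ i, ρ ≤ P' i := fun i ↦ le_poolSize _ _
    obtain ⟨v, hv⟩ : S.Nonempty := card_pos.1 (by have := hρP' 0; omega)
    refine (hst.canForce_star hv (n := m * P + ρ.choose 2) fun c ↦ ?_).mono
      (by rw [hS, add_mul, one_mul]; omega)
    obtain ⟨i, hi⟩ := (S.erase v).exists_le_card_filter_of_sum_lt (fun w ↦ c s(v, w)) P' (by
      rw [card_erase_of_mem hv, hS, hP, Fin.sum_univ_two]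
      have := hρP' 0
      have := hρP' 1
      omega)
    obtain ⟨S', hS'N, hS'⟩ := exists_subset_card_eq hi
    have hki := ne_zero_of_lt_ramsey2 hleaf i
    refine (ih ?_ (hst.child hv c hki hS'N) hS').mono ?_
    · have := sum_update_sub_one k hki
      rw [Fin.sum_univ_two, Fin.sum_univ_two] at this
      omega
    · have : P' i ≤ P := by fin_cases i <;> simp [hP]
      exact Nat.add_le_add_right (Nat.mul_le_mul_left _ this) _

end SpineState

theorem onlineRamsey_le_poolSize (t : ℕ) (hρ : 0 < ρ) :
    onlineRamsey 2 (⊤ : SimpleGraph (Fin t)) ≤ (t + t) * poolSize ρ t t + ρ.choose 2 :=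
  onlineRamsey_le_of_canForce <| SpineState.canForce (K := fun _ ↦ ∅) (k := fun _ ↦ t) hρ (t + t)
    rfl ⟨by simp, by simp, by simp, by simp, by simp⟩ (card_range _)

/-- The right-hand side, divided by `(w + 1) ^ s * w ^ (a + b)`, is additive along the recursion
defining `poolSize` and is at least `ρ` whenever `s ≤ a` or `s ≤ b`. -/
theorem pow_mul_poolSize_le (s w : ℕ) {a b : ℕ} (hab : s ≤ a ∨ s ≤ b) :
    (w + 1) ^ s * w ^ (a + b) * poolSize (ramsey2 s s) a b ≤
      ramsey2 s s * (w + 1) ^ (a + b) * (w ^ a + w ^ b) := by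
  obtain ⟨n, hn⟩ : ∃ n, a + b = n := ⟨_, rfl⟩
  induction n using Nat.strong_induction_on generalizing a b with
  | _ n ih =>
  by_cases hleaf : ramsey2 a b ≤ ramsey2 s s
  · rw [poolSize_of_le hleaf, mul_comm _ (ramsey2 s s), mul_assoc]
    refine Nat.mul_le_mul_left _ ?_
    have key : ∀ {x y : ℕ}, s ≤ x → (w + 1) ^ s * w ^ (x + y) ≤ (w + 1) ^ (x + y) * w ^ x := by
      intro x y hx
      calc (w + 1) ^ s * w ^ (x + y) = (w + 1) ^ s * w ^ y * w ^ x := by ring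
        _ ≤ (w + 1) ^ x * (w + 1) ^ y * w ^ x := by gcongr <;> omega
        _ = (w + 1) ^ (x + y) * w ^ x := by ring
    rcases hab with h | h
    · exact (key h).trans (Nat.mul_le_mul_left _ (Nat.le_add_right _ _))
    · rw [add_comm a b]
      exact (key h).trans (Nat.mul_le_mul_left _ (Nat.le_add_left _ _))
  push Not at hleaf
  obtain ⟨a, rfl⟩ := Nat.exists_eq_succ_of_ne_zero (ne_zero_of_lt_ramsey2 (k := ![a, b]) hleaf 0)
  obtain ⟨b, rfl⟩ := Nat.exists_eq_succ_of_ne_zero (ne_zero_of_lt_ramsey2 (k := ![a + 1, b]) hleaf 1)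
  have hsab : s ≤ a ∨ s ≤ b := by
    by_contra! hcon
    exact hleaf.not_ge (ramsey2_mono (by omega) (by omega))
  have ih₁ := ih (a + b + 1) (by omega) (a := a) (b := b + 1) (by omega) (by omega)
  have ih₂ := ih (a + b + 1) (by omega) (a := a + 1) (b := b) (by omega) (by omega)
  rw [show a + (b + 1) = a + b + 1 by ring] at ih₁
  rw [show a + 1 + b = a + b + 1 by ring] at ih₂
  rw [poolSize_of_lt hleaf]
  calc (w + 1) ^ s * w ^ (a + 1 + (b + 1)) *
        (poolSize (ramsey2 s s) a (b + 1) + poolSize (ramsey2 s s) (a + 1) b)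
      = w * ((w + 1) ^ s * w ^ (a + b + 1) * poolSize (ramsey2 s s) a (b + 1) +
          (w + 1) ^ s * w ^ (a + b + 1) * poolSize (ramsey2 s s) (a + 1) b) := by ring
    _ ≤ w * (ramsey2 s s * (w + 1) ^ (a + b + 1) * (w ^ a + w ^ (b + 1)) +
          ramsey2 s s * (w + 1) ^ (a + b + 1) * (w ^ (a + 1) + w ^ b)) := by gcongr
    _ = ramsey2 s s * (w + 1) ^ (a + 1 + (b + 1)) * (w ^ (a + 1) + w ^ (b + 1)) := by ring

theorem poolSize_diag_le {s t : ℕ} (hst : s ≤ t) :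
    (poolSize (ramsey2 s s) t t : ℝ) ≤ 2 * ramsey2 s s * 32 ^ (t - s) * (32 / 31) ^ t := by
  have e : (32 : ℝ) ^ s * 32 ^ (t - s) = 32 ^ t := by rw [← pow_add, Nat.add_sub_cancel' hst]
  refine le_of_mul_le_mul_left (a := (32 : ℝ) ^ s * 31 ^ (t + t)) ?_ (by positivity)
  calc (32 : ℝ) ^ s * 31 ^ (t + t) * poolSize (ramsey2 s s) t t
      ≤ ramsey2 s s * 32 ^ (t + t) * (31 ^ t + 31 ^ t) := by
        exact_mod_cast pow_mul_poolSize_le s 31 (Or.inl hst)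
    _ = _ := by
      rw [div_pow, pow_add, pow_add, ← e]
      field_simp
      ring

end Spine

section Estimates

open Real

theorem eventually_log_le_div_hundred : ∀ᶠ t : ℕ in atTop, Real.log t ≤ t / 100 := by
  filter_upwards [tendsto_natCast_atTop_atTop.eventually
    (isLittleO_log_id_atTop.bound (by norm_num : (0 : ℝ) < 1 / 100))] with t ht
  simp only [norm_eq_abs, id, Nat.abs_cast] at ht
  linarith [le_abs_self (Real.log t)]

theorem one_add_pow_le_exp {x : ℝ} (hx : 0 ≤ x) (n : ℕ) : (1 + x) ^ n ≤ exp (n * x) := by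
  rw [exp_nat_mul]
  exact pow_le_pow_left₀ (by linarith) (by linarith [add_one_le_exp x]) n

theorem spine_cost_le {t s : ℕ} {ρ : ℝ} (ht : 200 ≤ t) (hlog : Real.log t ≤ t / 100)
    (hs : 19 * t ≤ 20 * s + 20) (hst : s ≤ t) (hρ : √2 ^ s ≤ ρ) :
    1.001 ^ t * ((t + t) * (2 * ρ * 32 ^ (t - s) * (32 / 31) ^ t)) ≤
      exp (t / 50) * ρ ^ 2 / 8 := by
  have hl₁ := log_two_gt_d9
  have hl₂ := log_two_lt_d9
  have ht' : (200 : ℝ) ≤ t := by exact_mod_cast ht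
  have hs' : 19 * (t : ℝ) ≤ 20 * s + 20 := by exact_mod_cast hs
  have hexp5 : exp (5 * Real.log 2) = 32 := by
    rw [show (5 : ℝ) = (5 : ℕ) by norm_num, exp_nat_mul, exp_log two_pos]
    norm_num
  have h1001 : (1.001 : ℝ) ^ t ≤ exp (t / 1000) := by
    convert one_add_pow_le_exp (by norm_num : (0 : ℝ) ≤ 1 / 1000) t using 1 <;> ring_nf
  have h3231 : ((32 : ℝ) / 31) ^ t ≤ exp (t / 31) := by
    convert one_add_pow_le_exp (by norm_num : (0 : ℝ) ≤ 1 / 31) t using 1 <;> ring_nf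
  have h32 : (32 : ℝ) ^ (t - s) = exp (5 * Real.log 2 * (t - s)) := by
    rw [← Nat.cast_sub hst, mul_comm, exp_nat_mul, hexp5]
  have htexp : (t : ℝ) ≤ exp (t / 100) :=
    calc (t : ℝ) = exp (Real.log t) := (exp_log (by positivity)).symm
      _ ≤ exp (t / 100) := exp_le_exp.2 hlog
  have hρexp : exp (s * Real.log 2 / 2) ≤ ρ := by
    refine le_trans (le_of_eq ?_) hρ
    rw [show s * Real.log 2 / 2 = s * Real.log √2 by rw [log_sqrt zero_le_two]; ring,
      exp_nat_mul, exp_log (by positivity)]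
  have hρ0 : 0 ≤ ρ := (exp_pos _).le.trans hρexp
  have hexponent : t / 1000 + t / 100 + 5 * Real.log 2 * (t - s) + t / 31 ≤
      t / 50 + s * Real.log 2 / 2 - 5 * Real.log 2 := by
    nlinarith
  calc 1.001 ^ t * ((t + t) * (2 * ρ * 32 ^ (t - s) * (32 / 31) ^ t))
      = 4 * ρ * (1.001 ^ t * t * 32 ^ (t - s) * (32 / 31) ^ t) := by ring
    _ ≤ 4 * ρ * (exp (t / 1000) * exp (t / 100) * exp (5 * Real.log 2 * (t - s)) *
        exp (t / 31)) := by
        rw [h32]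
        gcongr
    _ = 4 * ρ * exp (t / 1000 + t / 100 + 5 * Real.log 2 * (t - s) + t / 31) := by
        simp only [exp_add]
    _ ≤ 4 * ρ * exp (t / 50 + s * Real.log 2 / 2 - 5 * Real.log 2) := by gcongr
    _ = ρ * exp (t / 50) * exp (s * Real.log 2 / 2) / 8 := by
        rw [exp_sub, exp_add, hexp5]
        ring
    _ ≤ ρ * exp (t / 50) * ρ / 8 := by gcongr
    _ = exp (t / 50) * ρ ^ 2 / 8 := by ring

theorem brute_force_cost_le {t : ℕ} {ρ : ℝ} (ht : 200 ≤ t) (hρ : 0 ≤ ρ) :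
    1.001 ^ t * (ρ * (ρ - 1) / 2) ≤ exp (t / 50) * ρ ^ 2 / 8 := by
  have ht' : (200 : ℝ) ≤ t := by exact_mod_cast ht
  have h1001 : (1.001 : ℝ) ^ t ≤ exp (t / 1000) := by
    convert one_add_pow_le_exp (by norm_num : (0 : ℝ) ≤ 1 / 1000) t using 1 <;> ring_nf
  have h4 : 4 * exp ((t : ℝ) / 1000) ≤ exp (t / 50) := by
    rw [show (t : ℝ) / 50 = t / 1000 + 19 * t / 1000 by ring, exp_add]
    nlinarith [add_one_le_exp (19 * (t : ℝ) / 1000), exp_pos ((t : ℝ) / 1000)]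
  nlinarith [pow_pos (by norm_num : (0 : ℝ) < 1.001) t]

theorem eventually_cost_le :
    ∀ᶠ t : ℕ in atTop, ∀ (s : ℕ) (ρ R N : ℝ), 19 * t ≤ 20 * s + 20 → s ≤ t → √2 ^ s ≤ ρ →
      exp (t / 100) * ρ ≤ R →
      N ≤ (t + t) * (2 * ρ * 32 ^ (t - s) * (32 / 31) ^ t) + ρ * (ρ - 1) / 2 →
      1.001 ^ t * N ≤ R * (R - 1) / 2 := by
  filter_upwards [eventually_ge_atTop 200, eventually_log_le_div_hundred] with t ht hlog
  intro s ρ R N hs hst hρ hR hN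
  have ht' : (200 : ℝ) ≤ t := by exact_mod_cast ht
  have hρ1 : 1 ≤ ρ := (one_le_pow₀ (Real.one_le_sqrt.2 one_le_two)).trans hρ
  have hR2 : exp (t / 50) * ρ ^ 2 ≤ R ^ 2 := by
    calc exp (t / 50) * ρ ^ 2 = (exp (t / 100) * ρ) ^ 2 := by
          rw [mul_pow, ← exp_nat_mul]
          ring_nf
      _ ≤ R ^ 2 := by gcongr
  have hR_ge : 2 ≤ R := by
    nlinarith [add_one_le_exp ((t : ℝ) / 100), exp_pos ((t : ℝ) / 100)]
  have := spine_cost_le ht hlog hs hst hρ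
  have := brute_force_cost_le ht (zero_le_one.trans hρ1)
  calc 1.001 ^ t * N ≤ 1.001 ^ t * ((t + t) * (2 * ρ * 32 ^ (t - s) * (32 / 31) ^ t) +
        ρ * (ρ - 1) / 2) := by gcongr
    _ ≤ exp (t / 50) * ρ ^ 2 / 4 := by linarith
    _ ≤ R * (R - 1) / 2 := by nlinarith

theorem frequently_exp_mul_ramsey2_le :
    ∃ᶠ t : ℕ in atTop, exp (t / 100) * ramsey2 (19 * t / 20) (19 * t / 20) ≤ ramsey2 t t := by
  have hlog : ∃ᶠ t in atTop, Real.log (ramsey2 (19 * t / 20) (19 * t / 20)) + 1 / 100 * t ≤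
      Real.log (ramsey2 t t) := by
    refine frequently_add_mul_le (L := fun t ↦ Real.log (ramsey2 t t))
      (s := fun t ↦ 19 * t / 20) (α := Real.log 2 / 2) (δ := 1 / 20) (γ := 1 / 100)
      (by norm_num) (by norm_num) (by linarith [log_two_gt_d9]) (fun t ↦ ?_) ?_
    · have : ((19 * t / 20 : ℕ) : ℝ) ≤ (19 * t : ℕ) / (20 : ℕ) := Nat.cast_div_le
      push_cast at this
      linarith
    · filter_upwards [eventually_ge_atTop 4] with t ht
      have := Real.log_lt_log (by positivity) (sqrt_two_pow_lt_ramsey2 ht)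
      rw [Real.log_pow, log_sqrt zero_le_two] at this
      linarith
  refine (hlog.and_eventually (eventually_ge_atTop 100)).mono fun t ⟨hdrop, ht⟩ ↦ ?_
  have hρ0 : (0 : ℝ) < ramsey2 (19 * t / 20) (19 * t / 20) :=
    (by positivity : (0 : ℝ) < √2 ^ (19 * t / 20)).trans (sqrt_two_pow_lt_ramsey2 (by omega))
  have hR0 : (0 : ℝ) < ramsey2 t t :=
    hρ0.trans_le (by exact_mod_cast ramsey2_mono (by omega) (by omega))
  calc exp (t / 100) * ramsey2 (19 * t / 20) (19 * t / 20)
      = exp (Real.log (ramsey2 (19 * t / 20) (19 * t / 20)) + 1 / 100 * t) := by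
        rw [exp_add, exp_log hρ0]
        ring_nf
    _ ≤ exp (Real.log (ramsey2 t t)) := exp_le_exp.2 hdrop
    _ = ramsey2 t t := exp_log hR0

end Estimates

/-- For infinitely many `t`, the on-line Ramsey number of `K_t` is at most
`1.001^{-t} * C(r(t), 2)`. -/
theorem online_ramsey_infinitely_often_small :
    ∀ t₀ : ℕ, ∃ t : ℕ, t₀ ≤ t ∧ 0 < t ∧
      (onlineRamsey 2 (⊤ : SimpleGraph (Fin t)) : ℝ) ≤
        ((1.001 : ℝ) ^ t)⁻¹ * ((ramsey2 t t).choose 2) := by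
  intro t₀
  obtain ⟨t, hdrop, hcost, ht₀, ht⟩ := (frequently_exp_mul_ramsey2_le.and_eventually
    (eventually_cost_le.and ((eventually_ge_atTop t₀).and (eventually_ge_atTop 100)))).exists
  set s := 19 * t / 20
  have hρ := sqrt_two_pow_lt_ramsey2 (u := s) (by omega)
  have hρ0 : 0 < ramsey2 s s := by exact_mod_cast (by positivity : (0 : ℝ) < √2 ^ s).trans hρ
  refine ⟨t, ht₀, by omega, ?_⟩
  rw [le_inv_mul_iff₀ (by positivity), Nat.cast_choose_two]
  refine hcost s _ _ _ (by omega) (by omega) hρ.le hdrop ?_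
  rw [← Nat.cast_choose_two]
  calc (onlineRamsey 2 (⊤ : SimpleGraph (Fin t)) : ℝ)
      ≤ (t + t) * poolSize (ramsey2 s s) t t + (ramsey2 s s).choose 2 := by
        exact_mod_cast onlineRamsey_le_poolSize t hρ0
    _ ≤ _ := by gcongr; exact poolSize_diag_le (by omega)
end

section
/- Let 0 < ε ≤ 1 be real, let r ≥ 1 and s ≥ 1 be integers, and let G be a bipartite graph with parts A and B, where |A| = m and |B| = n, having at least ε·m·n edges. If m ≥ 2ε^{-1}r² and n ≥ 2ε^{-r}s, then G contains a complete bipartite subgraph with r vertices in A and s vertices in B (i.e. there exist sets A' ⊆ A with |A'| = r and B' ⊆ B with |B'| = s such that every vertex of A' is adjacent to every vertex of B'). -/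
/-!
Count pairs `(R, b)` with `R` an `r`-subset of the first part lying in the neighbourhood of `b`:
there are `∑_b C(d_b, r)` of them, so once this is at least `s · C(m, r)` some `R` has `s` common
neighbours. Since `r! · C(d, r) ≥ max(d - r + 1, 0)^r`, the power-mean inequality gives
`r! · ∑_b C(d_b, r) ≥ n (εm - r)^r`, and Bernoulli's inequality with `εm ≥ 2r²` gives
`(εm - r)^r ≥ (εm)^r / 2 ≥ s m^r / n ≥ s · r! · C(m, r) / n`.
-/

open Finset

section DoubleCounting

variable {α β : Type*} [Fintype α] [Fintype β]

theorem sum_card_filter_mem_eq_card [DecidableEq α] [DecidableEq β] (E : Finset (α × β)) :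
    ∑ b, #{a | (a, b) ∈ E} = #E := by
  calc ∑ b, #{a | (a, b) ∈ E} = ∑ b, ∑ a, if (a, b) ∈ E then 1 else 0 := by
        simp only [card_filter]
    _ = ∑ p : α × β, if p ∈ E then 1 else 0 := by rw [Fintype.sum_prod_type_right]
    _ = #E := by rw [sum_boole]; simp

variable [DecidableEq α] (N : β → Finset α)

theorem sum_card_filter_subset_eq_sum_choose (r : ℕ) :
    ∑ R ∈ powersetCard r univ, #{b | R ⊆ N b} = ∑ b, (#(N b)).choose r := by
  calc ∑ R ∈ powersetCard r univ, #{b | R ⊆ N b}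
      = ∑ b, #{R ∈ powersetCard r univ | R ⊆ N b} :=
        sum_card_bipartiteAbove_eq_sum_card_bipartiteBelow _
    _ = ∑ b, #(powersetCard r (N b)) := by
        congr! 2 with b
        ext R
        simp [mem_powersetCard, and_comm]
    _ = ∑ b, (#(N b)).choose r := by simp only [card_powersetCard]

theorem exists_complete_bipartite_of_mul_choose_le {r s : ℕ} (hr : r ≤ Fintype.card α)
    (h : s * (Fintype.card α).choose r ≤ ∑ b, (#(N b)).choose r) :
    ∃ A' : Finset α, ∃ B' : Finset β,
      #A' = r ∧ #B' = s ∧ ∀ a ∈ A', ∀ b ∈ B', a ∈ N b := by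
  rw [← sum_card_filter_subset_eq_sum_choose, ← card_univ, ← card_powersetCard, mul_comm,
    ← smul_eq_mul, ← sum_const] at h
  obtain ⟨A', hA', hs⟩ :=
    exists_le_of_sum_le (powersetCard_nonempty.2 (by simpa using hr)) h
  obtain ⟨B', hB'sub, hB'⟩ := exists_subset_card_eq hs
  exact ⟨A', B', (mem_powersetCard.1 hA').2, hB',
    fun a ha b hb => (mem_filter.1 (hB'sub hb)).2 ha⟩

end DoubleCounting

theorem card_mul_pow_le_sum_descFactorial {ι : Type*} (t : Finset ι) (d : ι → ℕ) (r : ℕ)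
    {y : ℝ} (hy : 0 ≤ y) (h : #t * (y + r - 1) ≤ ∑ i ∈ t, (d i : ℝ)) :
    #t * y ^ r ≤ ∑ i ∈ t, ((d i).descFactorial r : ℝ) := by
  obtain rfl | ht := t.eq_empty_or_nonempty
  · simp
  cases r with
  | zero => simp
  | succ k =>
    set f : ι → ℝ := fun i => ((d i - k : ℕ) : ℝ)
    have hf : #t * y ≤ ∑ i ∈ t, f i := by
      have hdf : ∀ i, (d i : ℝ) ≤ f i + k := fun i => by
        simp only [f]
        exact_mod_cast (le_tsub_add : d i ≤ d i - k + k)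
      calc (#t : ℝ) * y = #t * (y + ↑(k + 1) - 1) - #t * k := by push_cast; ring
        _ ≤ ∑ i ∈ t, (f i + k) - #t * k := by
          gcongr; exact h.trans (sum_le_sum fun i _ => hdf i)
        _ = ∑ i ∈ t, f i := by rw [sum_add_distrib, sum_const, nsmul_eq_mul]; ring
    have ht' : (0 : ℝ) < #t := by exact_mod_cast ht.card_pos
    calc (#t : ℝ) * y ^ (k + 1) = (#t * y) ^ (k + 1) / #t ^ k := by field_simp; ring
      _ ≤ (∑ i ∈ t, f i) ^ (k + 1) / #t ^ k := by gcongr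
      _ ≤ ∑ i ∈ t, f i ^ (k + 1) := pow_sum_div_card_le_sum_pow (fun i _ => by positivity) k
      _ ≤ ∑ i ∈ t, ((d i).descFactorial (k + 1) : ℝ) := sum_le_sum fun i _ => by
        simpa [f] using (Nat.cast_le (α := ℝ)).2 (Nat.pow_sub_le_descFactorial (d i) (k + 1))

theorem pow_le_two_mul_sub_pow {r : ℕ} {x : ℝ} (h : 2 * r ^ 2 ≤ x) :
    x ^ r ≤ 2 * (x - r) ^ r := by
  rcases r.eq_zero_or_pos with rfl | hr
  · norm_num
  have hr1 : (1 : ℝ) ≤ r := by exact_mod_cast hr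
  have hx : 0 < x := by nlinarith
  have hrx : r * (r / x) ≤ 1 / 2 := by
    rw [← mul_div_assoc, div_le_iff₀ hx]; nlinarith
  have hbern : 1 / 2 ≤ (1 - r / x) ^ r := by
    have hrx0 : 0 ≤ r / x := by positivity
    have := one_add_mul_le_pow (a := -(r / x)) (by nlinarith) r
    rw [← sub_eq_add_neg] at this
    linarith
  calc x ^ r = 2 * (x ^ r * (1 / 2)) := by ring
    _ ≤ 2 * (x ^ r * (1 - r / x) ^ r) := by gcongr
    _ = 2 * (x - r) ^ r := by rw [← mul_pow, mul_sub, mul_one, mul_div_cancel₀ _ hx.ne']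

theorem mul_descFactorial_le_sum_descFactorial {β : Type*} [Fintype β] (d : β → ℕ)
    {ε : ℝ} {r s m : ℕ} (hεm : 2 * (r : ℝ) ^ 2 ≤ ε * m)
    (hsn : 2 * (s : ℝ) ≤ Fintype.card β * ε ^ r)
    (hdeg : ε * m * Fintype.card β ≤ ∑ b, (d b : ℝ)) :
    s * m.descFactorial r ≤ ∑ b, (d b).descFactorial r := by
  have hr2 : (r : ℝ) ≤ r ^ 2 := by exact_mod_cast Nat.le_self_pow two_ne_zero r
  have hpower : Fintype.card β * (ε * m - r) ^ r ≤ ∑ b, ((d b).descFactorial r : ℝ) := by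
    simpa using card_mul_pow_le_sum_descFactorial univ d r (y := ε * m - r)
      (by nlinarith) (by rw [card_univ]; nlinarith)
  have hm : (0 : ℝ) ≤ m ^ r := by positivity
  suffices (s : ℝ) * m.descFactorial r ≤ ∑ b, ((d b).descFactorial r : ℝ) by
    exact_mod_cast this
  calc (s : ℝ) * m.descFactorial r ≤ s * m ^ r := by
        gcongr; exact_mod_cast Nat.descFactorial_le_pow m r
    _ ≤ Fintype.card β * (ε * m) ^ r / 2 := by rw [mul_pow]; nlinarith
    _ ≤ Fintype.card β * (ε * m - r) ^ r := by
        have := pow_le_two_mul_sub_pow hεm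
        rw [mul_div_assoc]; gcongr; linarith
    _ ≤ _ := hpower

theorem kovari_sos_turan_general (ε : ℝ) (hε0 : 0 < ε) (hε1 : ε ≤ 1) (r s m n : ℕ)
    (E : Finset (Fin m × Fin n))
    (hdens : ε * m * n ≤ E.card)
    (hm : 2 * ε⁻¹ * r ^ 2 ≤ (m : ℝ))
    (hn : 2 * (ε ^ r)⁻¹ * s ≤ (n : ℝ)) :
    ∃ A' : Finset (Fin m), ∃ B' : Finset (Fin n),
      A'.card = r ∧ B'.card = s ∧ ∀ a ∈ A', ∀ b ∈ B', (a, b) ∈ E := by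
  set N : Fin n → Finset (Fin m) := fun b => {a | (a, b) ∈ E}
  have hεm : 2 * (r : ℝ) ^ 2 ≤ ε * m := by
    calc 2 * (r : ℝ) ^ 2 = ε * (2 * ε⁻¹ * r ^ 2) := by field_simp
      _ ≤ ε * m := by gcongr
  have hrm : r ≤ m := by
    have : (r : ℝ) ≤ r ^ 2 := by exact_mod_cast Nat.le_self_pow two_ne_zero r
    exact_mod_cast (show (r : ℝ) ≤ m by nlinarith)
  have hsn : 2 * (s : ℝ) ≤ n * ε ^ r := by
    calc 2 * (s : ℝ) = ε ^ r * (2 * (ε ^ r)⁻¹ * s) := by field_simp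
      _ ≤ n * ε ^ r := by rw [mul_comm (n : ℝ)]; gcongr
  have hdeg : ε * m * n ≤ ∑ b, (#(N b) : ℝ) := by
    rwa [← Nat.cast_sum, sum_card_filter_mem_eq_card]
  have hcount := mul_descFactorial_le_sum_descFactorial (fun b => #(N b)) hεm
    (by simpa using hsn) (by simpa using hdeg)
  have hchoose : s * m.choose r ≤ ∑ b, (#(N b)).choose r := by
    simp only [Nat.descFactorial_eq_factorial_mul_choose, ← mul_sum, mul_left_comm s] at hcount
    exact Nat.le_of_mul_le_mul_left hcount r.factorial_pos
  obtain ⟨A', B', hA', hB', hAB⟩ :=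
    exists_complete_bipartite_of_mul_choose_le N (by simpa using hrm) (by simpa using hchoose)
  exact ⟨A', B', hA', hB', fun a ha b hb => by simpa [N] using hAB a ha b hb⟩

/-- Let `G` be a bipartite graph with parts of sizes `m` and `n` (edge set `E`) having at
least `ε m n` edges. If `m ≥ 2 ε⁻¹ r²` and `n ≥ 2 ε^{-r} s`, then `G` contains a complete
bipartite subgraph with `r` vertices in the first part and `s` in the second. -/
theorem kovari_sos_turan (ε : ℝ) (hε0 : 0 < ε) (hε1 : ε ≤ 1) (r s m n : ℕ)
    (hr : 1 ≤ r) (hs : 1 ≤ s) (E : Finset (Fin m × Fin n))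
    (hdens : ε * m * n ≤ E.card)
    (hm : 2 * ε⁻¹ * r ^ 2 ≤ (m : ℝ))
    (hn : 2 * (ε ^ r)⁻¹ * s ≤ (n : ℝ)) :
    ∃ A' : Finset (Fin m), ∃ B' : Finset (Fin n),
      A'.card = r ∧ B'.card = s ∧ ∀ a ∈ A', ∀ b ∈ B', (a, b) ∈ E :=
  kovari_sos_turan_general ε hε0 hε1 r s m n E hdens hm hn
end

section
/- Let G be a bipartite graph with finite parts A and B, and let r ≥ 1 and s ≥ 1 be integers. If G contains no complete bipartite subgraph with r vertices in A and s vertices in B, then ∑_{v ∈ B} C(d(v), r) ≤ C(|A|, r) · (s - 1), where d(v) denotes the degree of v (its number of neighbours in A) and C(·,·) denotes the binomial coefficient. -/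
/-!
Double count the pairs `(A', v)` with `A'` an `r`-subset of `A` and `v ∈ B` adjacent to every
vertex of `A'`: a vertex `v` lies in `C(d(v), r)` of them, while an `r`-set `A'` lies in at most
`s - 1` of them, since `s` common neighbours of `A'` would span a complete bipartite subgraph.
-/

open Finset

namespace Finset

variable {α β : Type*} [DecidableEq α]

theorem filter_subset_powersetCard_eq {S T : Finset α} (hT : T ⊆ S) (r : ℕ) :
    {A ∈ S.powersetCard r | A ⊆ T} = T.powersetCard r := by
  ext A
  simp only [mem_filter, mem_powersetCard]
  exact ⟨fun ⟨⟨_, hr⟩, hA⟩ => ⟨hA, hr⟩, fun ⟨hA, hr⟩ => ⟨⟨hA.trans hT, hr⟩, hA⟩⟩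

theorem sum_choose_card_eq_sum_card_filter_subset (N : β → Finset α) (S : Finset α)
    (t : Finset β) (hN : ∀ b ∈ t, N b ⊆ S) (r : ℕ) :
    ∑ b ∈ t, (#(N b)).choose r = ∑ A ∈ S.powersetCard r, #{b ∈ t | A ⊆ N b} := by
  calc ∑ b ∈ t, (#(N b)).choose r
      = ∑ b ∈ t, #{A ∈ S.powersetCard r | A ⊆ N b} := by
        refine sum_congr rfl fun b hb => ?_
        rw [filter_subset_powersetCard_eq (hN b hb), card_powersetCard]
    _ = ∑ A ∈ S.powersetCard r, #{b ∈ t | A ⊆ N b} :=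
        sum_card_bipartiteAbove_eq_sum_card_bipartiteBelow (fun b A => A ⊆ N b)

theorem sum_choose_card_le_of_card_filter_subset_lt (N : β → Finset α) (S : Finset α)
    (t : Finset β) (hN : ∀ b ∈ t, N b ⊆ S) {r s : ℕ}
    (h : ∀ A ⊆ S, #A = r → #{b ∈ t | A ⊆ N b} < s) :
    ∑ b ∈ t, (#(N b)).choose r ≤ (#S).choose r * (s - 1) := by
  rw [sum_choose_card_eq_sum_card_filter_subset N S t hN, ← card_powersetCard, ← smul_eq_mul]
  refine sum_le_card_nsmul _ _ _ fun A hA => ?_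
  have := h A (mem_powersetCard.1 hA).1 (mem_powersetCard.1 hA).2
  omega

end Finset

theorem count_pairs_of_no_complete_bipartite_general (m n r s : ℕ)
    (E : Finset (Fin m × Fin n))
    (h : ¬ ∃ A' : Finset (Fin m), ∃ B' : Finset (Fin n),
      A'.card = r ∧ B'.card = s ∧ ∀ a ∈ A', ∀ b ∈ B', (a, b) ∈ E) :
    ∑ b : Fin n, ((Finset.univ.filter (fun a : Fin m => (a, b) ∈ E)).card).choose r ≤
      m.choose r * (s - 1) := by
  have few_common_neighbours (A : Finset (Fin m)) (hA : #A = r) :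
      #{b | A ⊆ ({a | (a, b) ∈ E} : Finset (Fin m))} < s := by
    by_contra! hle
    obtain ⟨B, hB, hBcard⟩ := exists_subset_card_eq hle
    exact h ⟨A, B, hA, hBcard, fun a ha b hb => by simpa using (mem_filter.1 (hB hb)).2 ha⟩
  simpa using sum_choose_card_le_of_card_filter_subset_lt _ univ univ
    (fun _ _ => subset_univ _) fun A _ => few_common_neighbours A

/-- If a bipartite graph with parts of sizes `m`, `n` (edge set `E`) contains no complete
bipartite subgraph with `r` vertices in the first part and `s` in the second, then
`∑_{v ∈ B} C(d(v), r) ≤ C(m, r) (s - 1)`. -/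
theorem count_pairs_of_no_complete_bipartite (m n r s : ℕ) (hr : 1 ≤ r) (hs : 1 ≤ s)
    (E : Finset (Fin m × Fin n))
    (h : ¬ ∃ A' : Finset (Fin m), ∃ B' : Finset (Fin n),
      A'.card = r ∧ B'.card = s ∧ ∀ a ∈ A', ∀ b ∈ B', (a, b) ∈ E) :
    ∑ b : Fin n, ((Finset.univ.filter (fun a : Fin m => (a, b) ∈ E)).card).choose r ≤
      m.choose r * (s - 1) :=
  count_pairs_of_no_complete_bipartite_general m n r s E h
end

section
/- There are infinitely many positive integers t such that r(⌈0.99·t⌉) ≤ 1.001^{-t} · r(t); that is, for every t₀ there exists t ≥ t₀ with (r(⌈0.99·t⌉) : ℝ) ≤ 1.001^{-t} · r(t), where r(t) = r(t,t) is the diagonal Ramsey number. -/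
open Finset Filter

lemma card_filter_forall_mem_apply_eq {α β : Type*} [Fintype α] [DecidableEq α] [Fintype β]
    [DecidableEq β] (E : Finset α) (b : β) :
    #{c : α → β | ∀ a ∈ E, c a = b} = Fintype.card β ^ (Fintype.card α - #E) := by
  have hpi : ({c : α → β | ∀ a ∈ E, c a = b} : Finset (α → β))
      = Fintype.piFinset (fun a => if a ∈ E then {b} else univ) := by
    ext c
    simp only [mem_filter, mem_univ, true_and, Fintype.mem_piFinset]
    refine ⟨fun h a => ?_, fun h a ha => by simpa [ha] using h a⟩
    by_cases ha : a ∈ E <;> simp [ha, h]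
  simp only [hpi, Fintype.card_piFinset, apply_ite card, card_singleton, card_univ]
  rw [prod_ite, prod_const_one, one_mul, prod_const, ← card_compl]
  congr 2
  ext
  simp

section Colourings

variable {n q : ℕ}

open Classical in
lemma card_filter_exists_monoClique_le (t : ℕ) :
    #{c : Sym2 (Fin n) → Fin q | ∃ i, monoClique c i t}
      ≤ q * n.choose t * q ^ (Fintype.card (Sym2 (Fin n)) - t.choose 2) := by
  set cliqueEdges : Finset (Fin n) → Finset (Sym2 (Fin n)) :=
    fun A => A.offDiag.image Sym2.mk.uncurry
  have hsub : ({c | ∃ i, monoClique c i t} : Finset (Sym2 (Fin n) → Fin q)) ⊆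
      univ.biUnion fun i => (powersetCard t univ).biUnion fun A =>
        {c | ∀ e ∈ cliqueEdges A, c e = i} := by
    rintro c hc
    obtain ⟨i, A, hA, hmono⟩ := (mem_filter.1 hc).2
    simp only [mem_biUnion, mem_univ, true_and, mem_powersetCard_univ, mem_filter]
    refine ⟨i, A, hA, ?_⟩
    simp only [cliqueEdges, mem_image, mem_offDiag]
    rintro _ ⟨⟨a, b⟩, ⟨ha, hb, hab⟩, rfl⟩
    exact hmono a ha b hb hab
  calc _ ≤ _ := card_le_card hsub
    _ ≤ ∑ _i : Fin q, ∑ _A ∈ powersetCard t (univ : Finset (Fin n)),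
          q ^ (Fintype.card (Sym2 (Fin n)) - t.choose 2) := by
      refine card_biUnion_le.trans (sum_le_sum fun i _ => card_biUnion_le.trans ?_)
      refine sum_le_sum fun A hA => ?_
      rw [card_filter_forall_mem_apply_eq, Sym2.card_image_offDiag,
        mem_powersetCard_univ.1 hA, Fintype.card_fin]
    _ = _ := by simp [card_powersetCard, mul_assoc]

lemma exists_forall_not_monoClique {t : ℕ} (hq : 0 < q) (h : q * n ^ t < q ^ t.choose 2) :
    ∃ c : Sym2 (Fin n) → Fin q, ∀ i, ¬ monoClique c i t := by
  classical
  by_contra! hall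
  have hcard := card_filter_exists_monoClique_le (n := n) (q := q) t
  rw [filter_true_of_mem fun c _ => hall c, card_univ, Fintype.card_fun, Fintype.card_fin,
    Sym2.card, Fintype.card_fin] at hcard
  rcases lt_or_ge n t with hnt | htn
  · rw [Nat.choose_eq_zero_of_lt hnt, mul_zero, zero_mul] at hcard
    exact (pow_pos hq _).not_ge hcard
  have hN : t.choose 2 ≤ (n + 1).choose 2 := Nat.choose_le_choose 2 (by omega)
  have : q ^ (n + 1).choose 2 < q ^ (n + 1).choose 2 := calc
    _ ≤ q * n.choose t * q ^ ((n + 1).choose 2 - t.choose 2) := hcard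
    _ ≤ q * n ^ t * q ^ ((n + 1).choose 2 - t.choose 2) := by
      gcongr; exact Nat.choose_le_pow n t
    _ < q ^ t.choose 2 * q ^ ((n + 1).choose 2 - t.choose 2) := by gcongr
    _ = q ^ (n + 1).choose 2 := by rw [← pow_add, Nat.add_sub_cancel' hN]
  exact this.false

end Colourings

lemma forall_exists_monoClique_mono {q n m : ℕ} {k : Fin q → ℕ} (hnm : n ≤ m)
    (h : ∀ c : Sym2 (Fin n) → Fin q, ∃ i, monoClique c i (k i)) :
    ∀ c : Sym2 (Fin m) → Fin q, ∃ i, monoClique c i (k i) := by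
  intro c
  let e : Fin n ↪ Fin m := Fin.castLEEmb hnm
  obtain ⟨i, A, hA, hmono⟩ := h fun x => c (x.map e)
  refine ⟨i, A.map e, by rw [card_map, hA], ?_⟩
  simp only [Finset.mem_map]
  rintro _ ⟨a, ha, rfl⟩ _ ⟨b, hb, rfl⟩ hab
  simpa [Sym2.map_mk] using hmono a ha b hb (ne_of_apply_ne e hab)

lemma lt_ramseyQ_of_forall_not_monoClique {q n : ℕ} {k : Fin q → ℕ} (hpos : 0 < ramseyQ k)
    {c : Sym2 (Fin n) → Fin q} (hc : ∀ i, ¬ monoClique c i (k i)) : n < ramseyQ k := by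
  by_contra! hle
  have hramsey := Nat.sInf_mem (Nat.nonempty_of_pos_sInf hpos)
  obtain ⟨i, hi⟩ := forall_exists_monoClique_mono hle hramsey c
  exact hc i hi

/-- Erdős: for `n = 2 ^ ⌊(t - 3) / 2⌋` some colouring of `K_n` has no monochromatic `K_t`.
`ramsey2 t t = 0` would be the junk value `sInf ∅`. -/
lemma sqrt_two_pow_lt_four_mul_ramsey2 {t : ℕ} (ht : 3 ≤ t) (hpos : 0 < ramsey2 t t) :
    √2 ^ t < 4 * ramsey2 t t := by
  set m := (t - 3) / 2
  have hexp : m * t + 1 < t.choose 2 := by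
    have h2 : 2 * t.choose 2 = t * (t - 1) := by
      rw [Nat.choose_two_right, Nat.mul_div_cancel' (Nat.even_mul_pred_self t).two_dvd]
    obtain ⟨u, rfl⟩ : ∃ u, t = u + 3 := ⟨t - 3, by omega⟩
    have hm : 2 * m ≤ u := by omega
    rw [show u + 3 - 1 = u + 2 by omega] at h2
    nlinarith
  obtain ⟨c, hc⟩ := exists_forall_not_monoClique (n := 2 ^ m) (t := t) two_pos <| by
    rw [← pow_mul, ← pow_succ']
    exact Nat.pow_lt_pow_right one_lt_two hexp
  have hlt : 2 ^ m < ramsey2 t t :=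
    lt_ramseyQ_of_forall_not_monoClique hpos (c := c) fun i => by fin_cases i <;> exact hc _
  calc √2 ^ t ≤ √2 ^ (2 * m + 4) := pow_le_pow_right₀ (Real.one_le_sqrt.2 one_le_two) (by omega)
    _ = 4 * 2 ^ m := by
      rw [pow_add, pow_mul, show (4 : ℕ) = 2 * 2 from rfl, pow_mul]
      norm_num [mul_comm]
    _ < 4 * ramsey2 t t := by gcongr; exact_mod_cast hlt

/-- The condition `t + k * s t ≤ k * t` makes the factors `c ^ t` collected along the recursion
multiply to at most `c ^ (k * t)`. -/
lemma exists_forall_le_pow_mul_of_le_pow_mul_comp {f : ℕ → ℝ} {s : ℕ → ℕ} {c : ℝ} {k t₁ : ℕ}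
    (hc : 1 ≤ c) (hs : ∀ t ≥ t₁, s t < t ∧ t + k * s t ≤ k * t)
    (hf : ∀ t ≥ t₁, f t ≤ c ^ t * f (s t)) : ∃ M, ∀ t, f t ≤ c ^ (k * t) * M := by
  obtain ⟨M₀, hM₀⟩ := ((Set.finite_Iio t₁).image f).bddAbove
  refine ⟨max M₀ 0, fun t => ?_⟩
  induction t using Nat.strong_induction_on with
  | _ t ih =>
    rcases lt_or_ge t t₁ with ht | ht
    · calc f t ≤ max M₀ 0 := (hM₀ ⟨t, ht, rfl⟩).trans (le_max_left _ _)
        _ ≤ c ^ (k * t) * max M₀ 0 := le_mul_of_one_le_left (le_max_right _ _) (one_le_pow₀ hc)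
    · obtain ⟨hst, hkst⟩ := hs t ht
      calc f t ≤ c ^ t * f (s t) := hf t ht
        _ ≤ c ^ t * (c ^ (k * s t) * max M₀ 0) := by gcongr; exact ih _ hst
        _ = c ^ (t + k * s t) * max M₀ 0 := by rw [pow_add, mul_assoc]
        _ ≤ c ^ (k * t) * max M₀ 0 := by gcongr

lemma eventually_mul_pow_lt_pow {a b : ℝ} (hb : 0 < b) (hba : b < a) (C : ℝ) :
    ∀ᶠ T in atTop, C * b ^ T < a ^ T := by
  filter_upwards [(tendsto_pow_atTop_atTop_of_one_lt ((one_lt_div hb).2 hba)).eventually_gt_atTop C]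
    with T hT
  calc C * b ^ T < (a / b) ^ T * b ^ T := by gcongr
    _ = a ^ T := by rw [div_pow, div_mul_cancel₀ _ (pow_pos hb T).ne']

lemma natCeil_099_mul_bounds {t : ℕ} (ht : 200 ≤ t) :
    ⌈(0.99 : ℝ) * t⌉₊ < t ∧ t + 200 * ⌈(0.99 : ℝ) * t⌉₊ ≤ 200 * t := by
  have hlt := Nat.ceil_lt_add_one (by positivity : (0 : ℝ) ≤ 0.99 * t)
  have ht' : (200 : ℝ) ≤ t := by exact_mod_cast ht
  constructor
  · have : (⌈(0.99 : ℝ) * t⌉₊ : ℝ) < t := by linarith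
    exact_mod_cast this
  · have : (t : ℝ) + 200 * ⌈(0.99 : ℝ) * t⌉₊ ≤ 200 * t := by linarith
    exact_mod_cast this

/-- For infinitely many `t`, `r(⌈0.99 t⌉) ≤ 1.001^{-t} r(t)`. -/
theorem diagonal_ramsey_jump_infinitely_often :
    ∀ t₀ : ℕ, ∃ t : ℕ, t₀ ≤ t ∧ 0 < t ∧
      (ramsey2 ⌈(0.99 : ℝ) * t⌉₊ ⌈(0.99 : ℝ) * t⌉₊ : ℝ) ≤
        ((1.001 : ℝ) ^ t)⁻¹ * ramsey2 t t := by
  intro t₀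
  by_contra! hjump
  set s : ℕ → ℕ := fun t => ⌈(0.99 : ℝ) * t⌉₊
  have hrec : ∀ t ≥ max t₀ 200, (ramsey2 t t : ℝ) < 1.001 ^ t * ramsey2 (s t) (s t) := by
    intro t ht
    have := hjump t (le_of_max_le_left ht) (by omega)
    rwa [inv_mul_lt_iff₀ (by positivity)] at this
  obtain ⟨M, hM⟩ := exists_forall_le_pow_mul_of_le_pow_mul_comp (f := fun t => (ramsey2 t t : ℝ))
    (by norm_num) (fun t ht => natCeil_099_mul_bounds (le_of_max_le_right ht))
    (fun t ht => (hrec t ht).le)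
  have hb : (1.001 : ℝ) ^ 200 < √2 := by
    rw [Real.lt_sqrt (by positivity)]
    calc ((1.001 : ℝ) ^ 200) ^ 2 < 1.25 ^ 2 := by gcongr; norm_num
      _ < 2 := by norm_num
  have hs : Tendsto s atTop atTop := tendsto_nat_ceil_atTop.comp <|
    tendsto_natCast_atTop_atTop.const_mul_atTop (by norm_num)
  obtain ⟨t, ht, hgap, hs3⟩ := ((eventually_ge_atTop (max t₀ 200)).and <| hs.eventually <|
    (eventually_mul_pow_lt_pow (by positivity) hb (4 * M)).and (eventually_ge_atTop 3)).exists
  have hpos : 0 < ramsey2 (s t) (s t) := by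
    have := (Nat.cast_nonneg _).trans_lt (hrec t ht)
    exact_mod_cast pos_of_mul_pos_right this (by positivity)
  have hlarge := sqrt_two_pow_lt_four_mul_ramsey2 hs3 hpos
  have hupper := hM (s t)
  rw [pow_mul] at hupper
  linarith
end

section
/- For all natural numbers k and l with 2k ≤ l, the binomial coefficient satisfies (C(k+l, k) : ℝ) ≤ 2^{k + 3l/4} · (5/3)^{l/4}, where the exponents 3l/4 and l/4 are real numbers. -/
/-!
A single term of the binomial expansion of `(1 + 3)^(k + l)` gives `C(k+l, k) · 3^l ≤ 4^(k+l)`.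
Raising the claim to the fourth power clears the fractional exponents and turns it into
`C(k+l, k)^4 · 3^l ≤ 2^(4k + 3l) · 5^l`. Multiplied by `3^(3l)`, this follows from the first
bound, since `4k ≤ 2l` gives `2^(8k + 8l) ≤ 2^(4k + 3l) · 128^l` and `128 ≤ 5 · 3^3`.
-/

open Finset Real

theorem pow_mul_pow_mul_choose_le_add_pow {R : Type*} [CommSemiring R] [PartialOrder R]
    [IsOrderedRing R] {x y : R} (hx : 0 ≤ x) (hy : 0 ≤ y) (k l : ℕ) :
    x ^ k * y ^ l * (k + l).choose k ≤ (x + y) ^ (k + l) := by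
  rw [add_pow]
  have hk : k ∈ range (k + l + 1) := mem_range.2 (by omega)
  convert single_le_sum (f := fun i => x ^ i * y ^ (k + l - i) * (k + l).choose i)
    (fun i _ => by positivity) hk using 1
  rw [Nat.add_sub_cancel_left]

theorem Nat.choose_mul_three_pow_le (k l : ℕ) : (k + l).choose k * 3 ^ l ≤ 4 ^ (k + l) := by
  simpa [mul_comm] using pow_mul_pow_mul_choose_le_add_pow (zero_le 1) (zero_le 3) k l

theorem Nat.choose_pow_four_mul_three_pow_le {k l : ℕ} (h : 2 * k ≤ l) :
    (k + l).choose k ^ 4 * 3 ^ l ≤ 2 ^ (4 * k + 3 * l) * 5 ^ l := by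
  refine Nat.le_of_mul_le_mul_right ?_ (pow_pos (by norm_num) (3 * l) : 0 < 3 ^ (3 * l))
  calc (k + l).choose k ^ 4 * 3 ^ l * 3 ^ (3 * l)
      = ((k + l).choose k * 3 ^ l) ^ 4 := by ring
    _ ≤ (4 ^ (k + l)) ^ 4 := Nat.pow_le_pow_left (choose_mul_three_pow_le k l) 4
    _ = 2 ^ (4 * k + 3 * l) * 2 ^ (4 * k + 5 * l) := by
        rw [show (4 : ℕ) = 2 ^ 2 from rfl, ← pow_mul, ← pow_mul, ← pow_add]; ring_nf
    _ ≤ 2 ^ (4 * k + 3 * l) * 128 ^ l := by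
        refine Nat.mul_le_mul_left _ ?_
        calc 2 ^ (4 * k + 5 * l) ≤ 2 ^ (7 * l) := Nat.pow_le_pow_right two_pos (by omega)
          _ = 128 ^ l := by rw [pow_mul]; norm_num
    _ ≤ 2 ^ (4 * k + 3 * l) * 5 ^ l * 3 ^ (3 * l) := by
        rw [mul_assoc, pow_mul, ← mul_pow]
        gcongr
        norm_num

/-- For `2k ≤ l`, `C(k+l, k) ≤ 2^{k + 3l/4} (5/3)^{l/4}`. -/
theorem choose_le_of_two_mul_le (k l : ℕ) (h : 2 * k ≤ l) :
    (((k + l).choose k : ℝ)) ≤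
      (2 : ℝ) ^ ((k : ℝ) + 3 * (l : ℝ) / 4) * ((5 : ℝ) / 3) ^ ((l : ℝ) / 4) := by
  have hrhs : ((2 : ℝ) ^ ((k : ℝ) + 3 * (l : ℝ) / 4) * ((5 : ℝ) / 3) ^ ((l : ℝ) / 4)) ^ 4
      = 2 ^ (4 * k + 3 * l) * (5 / 3) ^ l := by
    rw [mul_pow, ← rpow_mul_natCast zero_le_two, ← rpow_mul_natCast (by norm_num),
      ← rpow_natCast, ← rpow_natCast (5 / 3)]
    push_cast
    ring_nf
  rw [← pow_le_pow_iff_left₀ (by positivity) (by positivity) four_ne_zero, hrhs, div_pow,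
    mul_div_assoc', le_div_iff₀ (by positivity)]
  exact_mod_cast Nat.choose_pow_four_mul_three_pow_le h
end
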